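/- arXiv:2312.09304 — 6 statements merged into one kernel-verified Lean document; each statement's English description precedes it below -/
import Mathlib

section
/- Let o ∈ [0,1]^d, z its componentwise rounding (z^k = 1 iff o^k ≥ 0.5), and for an index l let R(z,l) be z with the l-th component flipped. Define the certainty u^k = |o^k − 0.5|. Then for any indices f, h: u^f ≤ u^h if and only if ‖o − R(z,f)‖_p ≤ ‖o − R(z,h)‖_p (for any fixed p ≥ 1). -/
noncomputable def lpN {d : ℕ} (p : ℝ) (v : Fin d → ℝ) : ℝ :=
  (∑ k, |v k| ^ p) ^ (1 / p)

noncomputable def rnd {d : ℕ} (o : Fin d → ℝ) : Fin d → ℝ :=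
  fun k => if (0.5 : ℝ) ≤ o k then 1 else 0

/-- flip the `l`-th component of a binary vector -/
noncomputable def flipOne {d : ℕ} (z : Fin d → ℝ) (l : Fin d) : Fin d → ℝ :=
  fun k => if k = l then 1 - z k else z k

lemma abs_near {x : ℝ} (h0 : 0 ≤ x) (h1 : x ≤ 1) :
    |x - (if (0.5 : ℝ) ≤ x then 1 else 0)| = 0.5 - |x - 0.5| := by
  split_ifs with hx
  · rw [abs_of_nonpos (by linarith), abs_of_nonneg (by linarith)]; ring
  · rw [abs_of_nonneg (by linarith), abs_of_nonpos (by linarith)]; ring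

lemma abs_far {x : ℝ} (h0 : 0 ≤ x) (h1 : x ≤ 1) :
    |x - (1 - (if (0.5 : ℝ) ≤ x then 1 else 0))| = 0.5 + |x - 0.5| := by
  split_ifs with hx
  · rw [sub_self, sub_zero, abs_of_nonneg (by linarith), abs_of_nonneg (by linarith)]; ring
  · rw [sub_zero, abs_of_nonpos (by linarith), abs_of_nonpos (by linarith)]; ring

lemma g_mono {p a b : ℝ} (hp : 1 ≤ p) (ha0 : 0 ≤ a) (ha1 : a ≤ 0.5)
    (hb0 : 0 ≤ b) (hb1 : b ≤ 0.5) :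
    a ≤ b ↔ (0.5 + a) ^ p - (0.5 - a) ^ p ≤ (0.5 + b) ^ p - (0.5 - b) ^ p := by
  have hp0 : (0 : ℝ) < p := by linarith
  constructor
  · intro hab
    have h1 : (0.5 + a) ^ p ≤ (0.5 + b) ^ p :=
      Real.rpow_le_rpow (by linarith) (by linarith) hp0.le
    have h2 : (0.5 - b) ^ p ≤ (0.5 - a) ^ p :=
      Real.rpow_le_rpow (by linarith) (by linarith) hp0.le
    linarith
  · intro hg
    by_contra hab
    push_neg at hab
    have h1 : (0.5 + b) ^ p ≤ (0.5 + a) ^ p :=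
      Real.rpow_le_rpow (by linarith) (by linarith) hp0.le
    have h2 : (0.5 - a) ^ p < (0.5 - b) ^ p :=
      Real.rpow_lt_rpow (by linarith) (by linarith) hp0
    linarith

theorem stmt2 {d : ℕ} (hd : 1 ≤ d) (p : ℝ) (hp : 1 ≤ p)
    (o : Fin d → ℝ) (ho : ∀ k, o k ∈ Set.Icc (0 : ℝ) 1) (f h : Fin d) :
    |o f - 0.5| ≤ |o h - 0.5| ↔
      lpN p (fun k => o k - flipOne (rnd o) f k) ≤
        lpN p (fun k => o k - flipOne (rnd o) h k) := by
  have hp0 : (0 : ℝ) < p := by linarith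
  have key : ∀ l : Fin d,
      (∑ k, |o k - flipOne (rnd o) l k| ^ p) =
      (∑ k, (0.5 - |o k - 0.5|) ^ p) +
        ((0.5 + |o l - 0.5|) ^ p - (0.5 - |o l - 0.5|) ^ p) := by
    intro l
    have hpt : ∀ k : Fin d, |o k - flipOne (rnd o) l k| ^ p =
        (0.5 - |o k - 0.5|) ^ p +
          (if k = l then (0.5 + |o l - 0.5|) ^ p - (0.5 - |o l - 0.5|) ^ p else 0) := by
      intro k
      rcases eq_or_ne k l with hk | hk
      · subst hk
        simp only [flipOne, rnd, eq_self_iff_true, if_true]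
        rw [abs_far (ho k).1 (ho k).2]; ring
      · simp only [flipOne, rnd, if_neg hk]
        rw [abs_near (ho k).1 (ho k).2]; ring
    simp_rw [hpt, Finset.sum_add_distrib, Finset.sum_ite_eq' Finset.univ l,
      Finset.mem_univ, if_true]
  have hu : ∀ l : Fin d, 0 ≤ |o l - 0.5| ∧ |o l - 0.5| ≤ 0.5 := by
    intro l
    refine ⟨abs_nonneg _, abs_le.2 ⟨by linarith [(ho l).1], by linarith [(ho l).2]⟩⟩
  have hsum_nonneg : ∀ l : Fin d, 0 ≤ ∑ k, |o k - flipOne (rnd o) l k| ^ p := by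
    intro l
    exact Finset.sum_nonneg fun k _ => Real.rpow_nonneg (abs_nonneg _) p
  rw [g_mono hp (hu f).1 (hu f).2 (hu h).1 (hu h).2]
  unfold lpN
  rw [Real.rpow_le_rpow_iff (hsum_nonneg f) (hsum_nonneg h) (by positivity : (0:ℝ) < 1/p)]
  rw [key f, key h]
  constructor <;> intro <;> linarith
end

section
/- Let o ∈ [0,1]^d, z its rounding, u^k = |o^k − 0.5|, and p ≥ 1. Suppose σ is a permutation of {1,…,d} sorting the certainties in ascending order, i.e. u^{σ(1)} ≤ … ≤ u^{σ(d)}. Then for any set S of ν distinct indices, ‖o − flip(z,S)‖_p ≥ ‖o − flip(z,{σ(1),…,σ(ν)})‖_p. That is, among all label-sets differing from z in exactly ν coordinates, the minimal L^p nonconformity is achieved by flipping the ν least-certain coordinates. -/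
noncomputable def flipSet {d : ℕ} (z : Fin d → ℝ) (S : Finset (Fin d)) : Fin d → ℝ :=
  fun k => if k ∈ S then 1 - z k else z k

/-- the set of the `ν` least-certain indices `{σ(1), …, σ(ν)}` -/
def firstIdx {d : ℕ} (σ : Equiv.Perm (Fin d)) (ν : ℕ) : Finset (Fin d) :=
  (Finset.univ.filter (fun i : Fin d => (i : ℕ) < ν)).image σ

theorem stmt5 {d : ℕ} (hd : 1 ≤ d) (p : ℝ) (hp : 1 ≤ p)
    (o : Fin d → ℝ) (ho : ∀ k, o k ∈ Set.Icc (0 : ℝ) 1)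
    (σ : Equiv.Perm (Fin d))
    (hσ : ∀ i j : Fin d, i ≤ j → |o (σ i) - 0.5| ≤ |o (σ j) - 0.5|)
    (ν : ℕ) (hν : ν ≤ d) (S : Finset (Fin d)) (hS : S.card = ν) :
    lpN p (fun k => o k - flipSet (rnd o) (firstIdx σ ν) k) ≤
      lpN p (fun k => o k - flipSet (rnd o) S k) := by
  have hp0 : (0:ℝ) ≤ p := le_trans zero_le_one hp
  set T : Finset (Fin d) := firstIdx σ ν with hTdef
  set f : Fin d → ℝ := fun k => (0.5 - |o k - 0.5|) ^ p with hf
  set g : Fin d → ℝ := fun k => (0.5 + |o k - 0.5|) ^ p with hg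
  have hu5 : ∀ k, |o k - 0.5| ≤ 0.5 := by
    intro k
    have h1 := (ho k).1; have h2 := (ho k).2
    rw [abs_le]; constructor <;> [linarith; linarith]
  have habs : ∀ (A : Finset (Fin d)) (k : Fin d),
      |o k - flipSet (rnd o) A k| = if k ∈ A then 0.5 + |o k - 0.5| else 0.5 - |o k - 0.5| := by
    intro A k
    have h1 := (ho k).1; have h2 := (ho k).2
    unfold flipSet rnd
    rcases le_or_gt (0.5:ℝ) (o k) with h5 | h5
    · rw [if_pos h5, abs_of_nonneg (by linarith : (0:ℝ) ≤ o k - 0.5)]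
      by_cases hA : k ∈ A
      · rw [if_pos hA, if_pos hA, show o k - (1 - 1) = o k by ring,
          abs_of_nonneg (by linarith)]
        ring
      · rw [if_neg hA, if_neg hA, abs_of_nonpos (by linarith : o k - 1 ≤ 0)]
        ring
    · rw [if_neg (not_le.mpr h5), abs_of_nonpos (by linarith : o k - 0.5 ≤ 0)]
      by_cases hA : k ∈ A
      · rw [if_pos hA, if_pos hA, show (1:ℝ) - 0 = 1 by ring,
          abs_of_nonpos (by linarith : o k - 1 ≤ 0)]
        ring
      · rw [if_neg hA, if_neg hA, sub_zero, abs_of_nonneg (by linarith)]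
        ring
  have hsum : ∀ A : Finset (Fin d),
      ∑ k, |o k - flipSet (rnd o) A k| ^ p = ∑ k, f k + ∑ k ∈ A, (g k - f k) := by
    intro A
    have hterm : ∀ k, |o k - flipSet (rnd o) A k| ^ p
        = f k + (if k ∈ A then g k - f k else 0) := by
      intro k
      rw [habs A k]
      by_cases hA : k ∈ A
      · rw [if_pos hA, if_pos hA, hf, hg]; ring
      · rw [if_neg hA, if_neg hA, hf]; ring
    simp_rw [hterm]
    rw [Finset.sum_add_distrib, Finset.sum_ite_mem, Finset.univ_inter]
  have hmono : ∀ x y : Fin d, |o x - 0.5| ≤ |o y - 0.5| → g x - f x ≤ g y - f y := by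
    intro x y hxy
    have h1 : g x ≤ g y :=
      Real.rpow_le_rpow (by positivity) (by linarith) hp0
    have h2 : f y ≤ f x :=
      Real.rpow_le_rpow (by have := hu5 y; linarith) (by linarith) hp0
    linarith
  have hT : ∀ x : Fin d, x ∈ T ↔ ((σ.symm x : Fin d) : ℕ) < ν := by
    intro x
    constructor
    · intro hx
      obtain ⟨a, ha, rfl⟩ := Finset.mem_image.mp hx
      simpa using (Finset.mem_filter.mp ha).2
    · intro hx
      exact Finset.mem_image.mpr ⟨σ.symm x, Finset.mem_filter.mpr ⟨Finset.mem_univ _, hx⟩,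
        σ.apply_symm_apply x⟩
  have hTcard : T.card = ν := by
    rw [hTdef]
    unfold firstIdx
    rw [Finset.card_image_of_injective _ σ.injective]
    have himg : Finset.univ.filter (fun i : Fin d => (i : ℕ) < ν)
        = Finset.image (Fin.castLE hν) Finset.univ := by
      ext x
      simp only [Finset.mem_filter, Finset.mem_univ, true_and, Finset.mem_image]
      constructor
      · intro hx; exact ⟨⟨(x : ℕ), hx⟩, rfl⟩
      · rintro ⟨a, rfl⟩; exact a.isLt
    rw [himg, Finset.card_image_of_injective _ (Fin.castLE_injective hν), Finset.card_univ,
      Fintype.card_fin]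
  have hkey : ∑ k ∈ T, (g k - f k) ≤ ∑ k ∈ S, (g k - f k) := by
    have hcard : (T \ S).card = (S \ T).card :=
      Finset.card_sdiff_comm (by rw [hTcard, hS])
    rcases (S \ T).eq_empty_or_nonempty with he | hne
    · have hTe : T \ S = ∅ := Finset.card_eq_zero.mp (by rw [hcard, he]; simp)
      have hTS : T = S := Finset.Subset.antisymm
        (Finset.sdiff_eq_empty_iff_subset.mp hTe)
        (Finset.sdiff_eq_empty_iff_subset.mp he)
      rw [hTS]
    · obtain ⟨y₀, hy₀, hy₀min⟩ := Finset.exists_min_image (S \ T) (fun k => g k - f k) hne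
      have hbound : ∀ x ∈ T \ S, g x - f x ≤ g y₀ - f y₀ := by
        intro x hx
        apply hmono
        have hx' : ((σ.symm x : Fin d) : ℕ) < ν := (hT x).mp (Finset.mem_sdiff.mp hx).1
        have hy' : ¬ ((σ.symm y₀ : Fin d) : ℕ) < ν :=
          fun h => (Finset.mem_sdiff.mp hy₀).2 ((hT y₀).mpr h)
        have hle : σ.symm x ≤ σ.symm y₀ := by
          rw [Fin.le_def]; omega
        simpa using hσ (σ.symm x) (σ.symm y₀) hle
      have h1 : ∑ k ∈ T \ S, (g k - f k) ≤ (T \ S).card • (g y₀ - f y₀) :=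
        Finset.sum_le_card_nsmul _ _ _ hbound
      have h2 : (S \ T).card • (g y₀ - f y₀) ≤ ∑ k ∈ S \ T, (g k - f k) :=
        Finset.card_nsmul_le_sum _ _ _ hy₀min
      have h3 : ∑ k ∈ T \ S, (g k - f k) ≤ ∑ k ∈ S \ T, (g k - f k) := by
        rw [hcard] at h1; linarith
      have := Finset.sum_sdiff_sub_sum_sdiff (s₁ := T) (s₂ := S) (f := fun k => g k - f k)
      linarith
  unfold lpN
  apply Real.rpow_le_rpow
  · apply Finset.sum_nonneg
    intro k _
    exact Real.rpow_nonneg (abs_nonneg _) p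
  · rw [hsum, hsum]
    linarith
  · positivity
end

section
/- Let o ∈ [0,1]^d, z its rounding, σ a permutation sorting u^k = |o^k − 0.5| ascending, and p ≥ 1. Fix a threshold α ≥ 0 and define t = min{ν ∈ {1,…,d} : ‖o − flip(z,{σ(1),…,σ(ν)})‖_p > α} (assuming such ν exists). Then every binary vector Y ∈ {0,1}^d whose Hamming distance to z is at least t satisfies ‖o − Y‖_p > α. Equivalently, {Y ∈ {0,1}^d : ‖o − Y‖_p ≤ α} ⊆ {Y : Hamming(Y, z) < t}. -/
/-- Hamming distance between `Y` and `z` -/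
noncomputable def hamming {d : ℕ} (Y z : Fin d → ℝ) : ℕ :=
  (Finset.univ.filter (fun k : Fin d => Y k ≠ z k)).card

lemma Finset.sum_le_sum_of_card_le_of_forall_le {ι : Type*} [DecidableEq ι] {S T : Finset ι}
    {f : ι → ℝ} (hf : ∀ j, 0 ≤ f j) (hcard : T.card ≤ S.card)
    (hle : ∀ k ∈ T, ∀ j ∉ T, f k ≤ f j) :
    ∑ k ∈ T, f k ≤ ∑ k ∈ S, f k := by
  rw [← sum_inter_add_sum_sdiff T S, ← sum_inter_add_sum_sdiff S T, inter_comm S T]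
  refine add_le_add_right ?_ _
  rcases (T \ S).eq_empty_or_nonempty with hempty | hne
  · rw [hempty, sum_empty]
    exact sum_nonneg fun j _ => hf j
  have hcard' : (T \ S).card ≤ (S \ T).card := by
    have := card_sdiff_add_card_inter T S
    have := card_sdiff_add_card_inter S T
    rw [inter_comm S T] at *
    omega
  obtain ⟨b, hb, hmin⟩ := exists_min_image (S \ T) f (card_pos.mp (hne.card_pos.trans_le hcard'))
  calc ∑ k ∈ T \ S, f k ≤ (T \ S).card • f b :=
        sum_le_card_nsmul _ _ _ fun k hk => hle k (mem_sdiff.mp hk).1 b (mem_sdiff.mp hb).2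
    _ ≤ (S \ T).card • f b := nsmul_le_nsmul_left (hf b) hcard'
    _ ≤ ∑ k ∈ S \ T, f k := card_nsmul_le_sum _ _ _ hmin

lemma mem_firstIdx {d : ℕ} {σ : Equiv.Perm (Fin d)} {ν : ℕ} {k : Fin d} :
    k ∈ firstIdx σ ν ↔ (σ.symm k : ℕ) < ν := by
  simp only [firstIdx, Finset.mem_image, Finset.mem_filter, Finset.mem_univ, true_and]
  constructor
  · rintro ⟨i, hi, rfl⟩
    simpa using hi
  · exact fun hk => ⟨σ.symm k, hk, σ.apply_symm_apply k⟩

lemma card_firstIdx {d : ℕ} (σ : Equiv.Perm (Fin d)) {ν : ℕ} (hν : ν ≤ d) :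
    (firstIdx σ ν).card = ν := by
  rw [firstIdx, Finset.card_image_of_injective _ σ.injective, Fin.card_filter_val_lt,
    min_eq_right hν]

lemma rnd_eq_zero_or_eq_one {d : ℕ} (o : Fin d → ℝ) (k : Fin d) :
    rnd o k = 0 ∨ rnd o k = 1 := by
  unfold rnd
  split_ifs <;> simp

lemma filter_flipSet_rnd_ne {d : ℕ} (o : Fin d → ℝ) (S : Finset (Fin d)) :
    Finset.univ.filter (fun k => flipSet (rnd o) S k ≠ rnd o k) = S := by
  ext k
  rcases rnd_eq_zero_or_eq_one o k with h | h <;> by_cases hk : k ∈ S <;>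
    simp [flipSet, hk, h]

section CostOfFlips

variable {d : ℕ} {o : Fin d → ℝ}

/-- The increase of `|o k - Y k| ^ p` when `Y k` switches from `rnd o k` to `1 - rnd o k`. -/
noncomputable def flipPenalty (p : ℝ) (o : Fin d → ℝ) (k : Fin d) : ℝ :=
  (0.5 + |o k - 0.5|) ^ p - (0.5 - |o k - 0.5|) ^ p

lemma abs_sub_rnd (ho : ∀ k, o k ∈ Set.Icc (0 : ℝ) 1) (k : Fin d) :
    |o k - rnd o k| = 0.5 - |o k - 0.5| := by
  obtain ⟨h0, h1⟩ := ho k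
  unfold rnd
  split_ifs with h
  · rw [abs_of_nonpos (by linarith), abs_of_nonneg (by linarith)]; ring
  · rw [abs_of_nonneg (by linarith), abs_of_nonpos (by linarith)]; ring

lemma abs_sub_one_sub_rnd (ho : ∀ k, o k ∈ Set.Icc (0 : ℝ) 1) (k : Fin d) :
    |o k - (1 - rnd o k)| = 0.5 + |o k - 0.5| := by
  obtain ⟨h0, h1⟩ := ho k
  unfold rnd
  split_ifs with h
  · rw [abs_of_nonneg (by linarith), abs_of_nonneg (by linarith)]; ring
  · rw [abs_of_nonpos (by linarith), abs_of_nonpos (by linarith)]; ring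

lemma sum_abs_sub_rpow_eq (ho : ∀ k, o k ∈ Set.Icc (0 : ℝ) 1) (p : ℝ) {W : Fin d → ℝ}
    (hW : ∀ k, W k = rnd o k ∨ W k = 1 - rnd o k) :
    ∑ k, |o k - W k| ^ p = ∑ k, (0.5 - |o k - 0.5|) ^ p +
      ∑ k ∈ Finset.univ.filter (fun k => W k ≠ rnd o k), flipPenalty p o k := by
  rw [Finset.sum_filter, ← Finset.sum_add_distrib]
  refine Finset.sum_congr rfl fun k _ => ?_
  rcases hW k with h | h
  · simp [h, abs_sub_rnd ho]
  · rcases rnd_eq_zero_or_eq_one o k with hz | hz <;>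
      simp [h, hz, ← abs_sub_one_sub_rnd ho k, ← abs_sub_rnd ho k, flipPenalty]

lemma flipPenalty_le_flipPenalty (ho : ∀ k, o k ∈ Set.Icc (0 : ℝ) 1) {p : ℝ} (hp : 0 ≤ p)
    {k j : Fin d} (hkj : |o k - 0.5| ≤ |o j - 0.5|) :
    flipPenalty p o k ≤ flipPenalty p o j := by
  have hj : |o j - 0.5| ≤ 0.5 := by
    obtain ⟨h0, h1⟩ := ho j
    rw [abs_le]; constructor <;> linarith
  unfold flipPenalty
  have := Real.rpow_le_rpow (by positivity) (add_le_add_right hkj 0.5) hp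
  have := Real.rpow_le_rpow (by linarith) (sub_le_sub_left hkj 0.5) hp
  linarith

lemma flipPenalty_nonneg (ho : ∀ k, o k ∈ Set.Icc (0 : ℝ) 1) {p : ℝ} (hp : 0 ≤ p) (k : Fin d) :
    0 ≤ flipPenalty p o k := by
  have h : |o k - 0.5| ≤ 0.5 := by
    obtain ⟨h0, h1⟩ := ho k
    rw [abs_le]; constructor <;> linarith
  unfold flipPenalty
  have := Real.rpow_le_rpow (by linarith) (by linarith [abs_nonneg (o k - 0.5)] :
    0.5 - |o k - 0.5| ≤ 0.5 + |o k - 0.5|) hp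
  linarith

theorem sum_abs_sub_flipSet_firstIdx_le (ho : ∀ k, o k ∈ Set.Icc (0 : ℝ) 1) {p : ℝ} (hp : 0 ≤ p)
    {σ : Equiv.Perm (Fin d)} (hσ : ∀ i j : Fin d, i ≤ j → |o (σ i) - 0.5| ≤ |o (σ j) - 0.5|)
    {t : ℕ} (htd : t ≤ d) {Y : Fin d → ℝ} (hY : ∀ k, Y k = 0 ∨ Y k = 1)
    (hYt : t ≤ hamming Y (rnd o)) :
    ∑ k, |o k - flipSet (rnd o) (firstIdx σ t) k| ^ p ≤ ∑ k, |o k - Y k| ^ p := by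
  have hflip : ∀ k, flipSet (rnd o) (firstIdx σ t) k = rnd o k ∨
      flipSet (rnd o) (firstIdx σ t) k = 1 - rnd o k := by
    intro k
    unfold flipSet
    split_ifs <;> simp
  have hYbin : ∀ k, Y k = rnd o k ∨ Y k = 1 - rnd o k := by
    intro k
    rcases hY k with h | h <;> rcases rnd_eq_zero_or_eq_one o k with h' | h' <;> norm_num [h, h']
  rw [sum_abs_sub_rpow_eq ho p hflip, sum_abs_sub_rpow_eq ho p hYbin, filter_flipSet_rnd_ne]
  gcongr 1
  refine Finset.sum_le_sum_of_card_le_of_forall_le (flipPenalty_nonneg ho hp)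
    (by rwa [card_firstIdx σ htd]) fun k hk j hj => flipPenalty_le_flipPenalty ho hp ?_
  rw [mem_firstIdx] at hk hj
  simpa using hσ (σ.symm k) (σ.symm j) (Fin.le_def.mpr (by omega))

end CostOfFlips

lemma lpN_le_lpN_of_sum_le {d : ℕ} {p : ℝ} (hp : 0 ≤ p) {v w : Fin d → ℝ}
    (h : ∑ k, |v k| ^ p ≤ ∑ k, |w k| ^ p) : lpN p v ≤ lpN p w :=
  Real.rpow_le_rpow (Finset.sum_nonneg fun _ _ => by positivity) h (by positivity)

theorem stmt6_general {d : ℕ} (p : ℝ) (hp : 1 ≤ p)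
    (o : Fin d → ℝ) (ho : ∀ k, o k ∈ Set.Icc (0 : ℝ) 1)
    (σ : Equiv.Perm (Fin d))
    (hσ : ∀ i j : Fin d, i ≤ j → |o (σ i) - 0.5| ≤ |o (σ j) - 0.5|)
    (α : ℝ) (t : ℕ)
    (ht : IsLeast {ν : ℕ | 1 ≤ ν ∧ ν ≤ d ∧
        α < lpN p (fun k => o k - flipSet (rnd o) (firstIdx σ ν) k)} t) :
    ∀ Y : Fin d → ℝ, (∀ k, Y k = 0 ∨ Y k = 1) → t ≤ hamming Y (rnd o) →
      α < lpN p (fun k => o k - Y k) := by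
  obtain ⟨⟨-, htd, hα_lt⟩, -⟩ := ht
  intro Y hY hYt
  have hp0 : 0 ≤ p := zero_le_one.trans hp
  exact hα_lt.trans_le <| lpN_le_lpN_of_sum_le hp0 <|
    sum_abs_sub_flipSet_firstIdx_le ho hp0 hσ htd hY hYt

theorem stmt6 {d : ℕ} (hd : 1 ≤ d) (p : ℝ) (hp : 1 ≤ p)
    (o : Fin d → ℝ) (ho : ∀ k, o k ∈ Set.Icc (0 : ℝ) 1)
    (σ : Equiv.Perm (Fin d))
    (hσ : ∀ i j : Fin d, i ≤ j → |o (σ i) - 0.5| ≤ |o (σ j) - 0.5|)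
    (α : ℝ) (hα : 0 ≤ α) (t : ℕ)
    (ht : IsLeast {ν : ℕ | 1 ≤ ν ∧ ν ≤ d ∧
        α < lpN p (fun k => o k - flipSet (rnd o) (firstIdx σ ν) k)} t) :
    ∀ Y : Fin d → ℝ, (∀ k, Y k = 0 ∨ Y k = 1) → t ≤ hamming Y (rnd o) →
      α < lpN p (fun k => o k - Y k) :=
  stmt6_general p hp o ho σ hσ α t ht
end

section
/- Let o ∈ [0,1]^d, z its rounding, and S ⊆ {1,…,d}. Then for p ≥ 1, ‖o − flip(z,S)‖_p^p = Σ_{k∉S} |o^k − z^k|^p + Σ_{k∈S} (|o^k − 0.5| + 0.5)^p, and in particular ‖o − flip(z,S)‖_p^p − ‖o − z‖_p^p = Σ_{k∈S} [ (u^k + 0.5)^p − (0.5 − u^k)^p ] where u^k = |o^k − 0.5|, so this difference is a nondecreasing function of each certainty u^k for k ∈ S. -/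
lemma lpN_pow {d : ℕ} {p : ℝ} (hp : 1 ≤ p) (v : Fin d → ℝ) :
    lpN p v ^ p = ∑ k, |v k| ^ p := by
  have hp0 : p ≠ 0 := by positivity
  have hs : (0:ℝ) ≤ ∑ k, |v k| ^ p :=
    Finset.sum_nonneg fun k _ => Real.rpow_nonneg (abs_nonneg _) _
  rw [lpN, ← Real.rpow_mul hs, one_div, inv_mul_cancel₀ hp0, Real.rpow_one]

theorem stmt9 {d : ℕ} (hd : 1 ≤ d) (p : ℝ) (hp : 1 ≤ p)
    (o : Fin d → ℝ) (ho : ∀ k, o k ∈ Set.Icc (0 : ℝ) 1)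
    (S : Finset (Fin d)) :
    lpN p (fun k => o k - flipSet (rnd o) S k) ^ p =
      (∑ k ∈ Sᶜ, |o k - rnd o k| ^ p) + ∑ k ∈ S, (|o k - 0.5| + 0.5) ^ p ∧
    lpN p (fun k => o k - flipSet (rnd o) S k) ^ p -
        lpN p (fun k => o k - rnd o k) ^ p =
      ∑ k ∈ S, ((|o k - 0.5| + 0.5) ^ p - (0.5 - |o k - 0.5|) ^ p) ∧
    (∀ u₁ ∈ Set.Icc (0:ℝ) 0.5, ∀ u₂ ∈ Set.Icc (0:ℝ) 0.5, u₁ ≤ u₂ →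
      (u₁ + 0.5) ^ p - (0.5 - u₁) ^ p ≤ (u₂ + 0.5) ^ p - (0.5 - u₂) ^ p) := by
  have hflip : ∀ k ∈ S, |o k - flipSet (rnd o) S k| = |o k - 0.5| + 0.5 := by
    intro k hk
    have h0 := (ho k).1
    have h1 := (ho k).2
    simp only [flipSet, rnd, if_pos hk]
    by_cases h : (0.5:ℝ) ≤ o k
    · rw [if_pos h, abs_of_nonneg (by linarith), abs_of_nonneg (by linarith)]; ring
    · rw [if_neg h, abs_of_nonpos (by linarith), abs_of_nonpos (by linarith)]; ring
  have hz : ∀ k ∈ S, |o k - rnd o k| = 0.5 - |o k - 0.5| := by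
    intro k hk
    have h0 := (ho k).1
    have h1 := (ho k).2
    simp only [rnd]
    by_cases h : (0.5:ℝ) ≤ o k
    · rw [if_pos h, abs_of_nonpos (by linarith), abs_of_nonneg (by linarith)]; ring
    · rw [if_neg h, abs_of_nonneg (by linarith), abs_of_nonpos (by linarith)]; ring
  have h1 : lpN p (fun k => o k - flipSet (rnd o) S k) ^ p =
      (∑ k ∈ Sᶜ, |o k - rnd o k| ^ p) + ∑ k ∈ S, (|o k - 0.5| + 0.5) ^ p := by
    rw [lpN_pow hp, ← Finset.sum_compl_add_sum S]
    congr 1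
    · apply Finset.sum_congr rfl
      intro k hk
      have hk' : k ∉ S := Finset.mem_compl.mp hk
      simp only [flipSet, if_neg hk']
    · exact Finset.sum_congr rfl fun k hk => by rw [hflip k hk]
  refine ⟨h1, ?_, ?_⟩
  · have hS : ∑ k ∈ S, |o k - rnd o k| ^ p = ∑ k ∈ S, (0.5 - |o k - 0.5|) ^ p :=
      Finset.sum_congr rfl fun k hk => by rw [hz k hk]
    rw [h1, lpN_pow hp, ← Finset.sum_compl_add_sum S, hS, Finset.sum_sub_distrib]
    ring
  · intro u₁ hu₁ u₂ hu₂ h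
    have := hu₁.1; have := hu₁.2; have := hu₂.1; have := hu₂.2
    have a : (u₁ + 0.5) ^ p ≤ (u₂ + 0.5) ^ p :=
      Real.rpow_le_rpow (by linarith) (by linarith) (by linarith)
    have b : (0.5 - u₂) ^ p ≤ (0.5 - u₁) ^ p :=
      Real.rpow_le_rpow (by linarith) (by linarith) (by linarith)
    linarith
end

section
/- Let o ∈ [0,1]^d, z its rounding, σ a permutation with u^{σ(1)} ≤ … ≤ u^{σ(d)} where u^k = |o^k − 0.5|, and p ≥ 1. If ‖o − flip(z,{σ(1)})‖_p > α ≥ ‖o − z‖_p, then the set {Y ∈ {0,1}^d : ‖o − Y‖_p ≤ α} equals exactly {z}. -/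
theorem stmt12 {d : ℕ} (hd : 1 ≤ d) (p : ℝ) (hp : 1 ≤ p)
    (o : Fin d → ℝ) (ho : ∀ k, o k ∈ Set.Icc (0 : ℝ) 1)
    (σ : Equiv.Perm (Fin d))
    (hσ : ∀ i j : Fin d, i ≤ j → |o (σ i) - 0.5| ≤ |o (σ j) - 0.5|)
    (α : ℝ) (hα : 0 ≤ α)
    (h₁ : α < lpN p (fun k => o k - flipSet (rnd o) (firstIdx σ 1) k))
    (h₂ : lpN p (fun k => o k - rnd o k) ≤ α) :
    {Y : Fin d → ℝ | (∀ k, Y k = 0 ∨ Y k = 1) ∧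
      lpN p (fun k => o k - Y k) ≤ α} = {rnd o} := by
  have hp0 : (0:ℝ) < p := lt_of_lt_of_le one_pos hp
  set u : Fin d → ℝ := fun k => |o k - 0.5| with hu
  have hu0 : ∀ k, 0 ≤ u k := fun k => abs_nonneg _
  have hu5 : ∀ k, u k ≤ 0.5 := by
    intro k
    have h := ho k
    rw [Set.mem_Icc] at h
    exact abs_le.mpr ⟨by linarith [h.1], by linarith [h.2]⟩
  have hz_same : ∀ k, |o k - rnd o k| = 0.5 - u k := by
    intro k
    have h := ho k
    rw [Set.mem_Icc] at h
    simp only [rnd, hu]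
    split_ifs with h5
    · rw [abs_of_nonpos (by linarith), abs_of_nonneg (by linarith)]; ring
    · rw [abs_of_nonneg (by linarith), abs_of_nonpos (by linarith)]; ring
  have hz_flip : ∀ k, |o k - (1 - rnd o k)| = 0.5 + u k := by
    intro k
    have h := ho k
    rw [Set.mem_Icc] at h
    simp only [rnd, hu]
    split_ifs with h5
    · rw [abs_of_nonneg (by linarith), abs_of_nonneg (by linarith)]; ring
    · rw [abs_of_nonpos (by linarith), abs_of_nonpos (by linarith)]; ring
  set i0 : Fin d := σ ⟨0, hd⟩ with hi0
  have hfirst : firstIdx σ 1 = {i0} := by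
    have : (Finset.univ.filter (fun i : Fin d => (i : ℕ) < 1)) = {(⟨0, hd⟩ : Fin d)} := by
      ext i
      simp [Fin.ext_iff, Nat.lt_one_iff]
    rw [firstIdx, this, Finset.image_singleton]
  have hflip : ∀ k, flipSet (rnd o) (firstIdx σ 1) k
      = if k = i0 then 1 - rnd o k else rnd o k := by
    intro k
    simp [flipSet, hfirst, Finset.mem_singleton]
  have hu_min : ∀ j, u i0 ≤ u j := by
    intro j
    have := hσ ⟨0, hd⟩ (σ.symm j) (by exact Fin.mk_le_of_le_val (Nat.zero_le _))
    simpa [hu] using this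
  -- key sum comparison
  have key : ∀ Y : Fin d → ℝ, (∀ k, Y k = 0 ∨ Y k = 1) → Y ≠ rnd o →
      lpN p (fun k => o k - flipSet (rnd o) (firstIdx σ 1) k) ≤ lpN p (fun k => o k - Y k) := by
    intro Y hY hne
    obtain ⟨j, hj⟩ := Function.ne_iff.mp hne
    have hYj : |o j - Y j| = 0.5 + u j := by
      have hz : rnd o j = 0 ∨ rnd o j = 1 := by
        simp only [rnd]; split_ifs <;> simp
      have : Y j = 1 - rnd o j := by
        rcases hY j with h | h <;> rcases hz with h' | h' <;>
          simp [h, h'] at hj ⊢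
      rw [this]; exact hz_flip j
    have hYk : ∀ k, 0.5 - u k ≤ |o k - Y k| := by
      intro k
      have hz : rnd o k = 0 ∨ rnd o k = 1 := by
        simp only [rnd]; split_ifs <;> simp
      rcases hY k with h | h <;> rcases hz with h' | h'
      · rw [show |o k - Y k| = |o k - rnd o k| by rw [h, h']]
        rw [hz_same k]
      · rw [show Y k = 1 - rnd o k by rw [h, h']; ring, hz_flip k]
        linarith [hu0 k]
      · rw [show Y k = 1 - rnd o k by rw [h, h']; ring, hz_flip k]
        linarith [hu0 k]
      · rw [show |o k - Y k| = |o k - rnd o k| by rw [h, h']]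
        rw [hz_same k]
    set f : Fin d → ℝ := fun k => (0.5 - u k) ^ p with hf
    set g : Fin d → ℝ := fun k => (0.5 + u k) ^ p with hg
    have hf_nonneg : ∀ k, (0:ℝ) ≤ 0.5 - u k := fun k => by linarith [hu5 k]
    have hB : ∑ k, |o k - flipSet (rnd o) (firstIdx σ 1) k| ^ p
        = (∑ k, f k) + (g i0 - f i0) := by
      have h1 : ∀ k, |o k - flipSet (rnd o) (firstIdx σ 1) k| ^ p
          = f k + (if k = i0 then g k - f k else 0) := by
        intro k
        rw [hflip k]
        split_ifs with h
        · subst h; rw [hz_flip]; simp only [hf, hg]; ring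
        · rw [hz_same]; simp only [hf]; ring
      rw [Finset.sum_congr rfl fun k _ => h1 k, Finset.sum_add_distrib,
        Finset.sum_ite_eq' Finset.univ i0 (fun k => g k - f k)]
      simp
    have hA : (∑ k, f k) + (g j - f j) ≤ ∑ k, |o k - Y k| ^ p := by
      have hterm : ∀ k, f k ≤ |o k - Y k| ^ p := by
        intro k
        exact Real.rpow_le_rpow (hf_nonneg k) (hYk k) (le_of_lt hp0)
      have hsum : g j - f j ≤ ∑ k, (|o k - Y k| ^ p - f k) := by
        have h0 := Finset.single_le_sum (f := fun k => |o k - Y k| ^ p - f k)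
          (fun k _ => sub_nonneg.mpr (hterm k)) (Finset.mem_univ j)
        rw [hYj] at h0
        exact h0
      rw [Finset.sum_sub_distrib] at hsum
      linarith
    have hmono : g i0 - f i0 ≤ g j - f j := by
      have h1 : g i0 ≤ g j :=
        Real.rpow_le_rpow (by linarith [hu0 i0]) (by linarith [hu_min j]) (le_of_lt hp0)
      have h2 : f j ≤ f i0 :=
        Real.rpow_le_rpow (hf_nonneg j) (by linarith [hu_min j]) (le_of_lt hp0)
      linarith
    have hBA : ∑ k, |o k - flipSet (rnd o) (firstIdx σ 1) k| ^ p
        ≤ ∑ k, |o k - Y k| ^ p := by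
      rw [hB]; linarith
    have hBnn : (0:ℝ) ≤ ∑ k, |o k - flipSet (rnd o) (firstIdx σ 1) k| ^ p :=
      Finset.sum_nonneg fun k _ => Real.rpow_nonneg (abs_nonneg _) p
    exact Real.rpow_le_rpow hBnn hBA (by positivity)
  ext Y
  simp only [Set.mem_setOf_eq, Set.mem_singleton_iff]
  constructor
  · rintro ⟨hYbin, hYle⟩
    by_contra hne
    have := key Y hYbin hne
    linarith
  · rintro rfl
    refine ⟨fun k => ?_, h₂⟩
    simp only [rnd]; split_ifs <;> simp
end

section
/- Let o ∈ [0,1]^d, z its rounding, σ a sorting permutation of the certainties u^k = |o^k − 0.5| in ascending order, and p ≥ 1. The sequence ν ↦ ‖o − flip(z,{σ(1),…,σ(ν)})‖_p, ν = 0,1,…,d (with the convention that ν = 0 gives ‖o − z‖_p), is nondecreasing in ν. -/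
theorem stmt13 {d : ℕ} (hd : 1 ≤ d) (p : ℝ) (hp : 1 ≤ p)
    (o : Fin d → ℝ) (ho : ∀ k, o k ∈ Set.Icc (0 : ℝ) 1)
    (σ : Equiv.Perm (Fin d))
    (hσ : ∀ i j : Fin d, i ≤ j → |o (σ i) - 0.5| ≤ |o (σ j) - 0.5|)
    (ν μ : ℕ) (hνμ : ν ≤ μ) (hμ : μ ≤ d) :
    lpN p (fun k => o k - flipSet (rnd o) (firstIdx σ ν) k) ≤
      lpN p (fun k => o k - flipSet (rnd o) (firstIdx σ μ) k) := by
  have hsub : firstIdx σ ν ⊆ firstIdx σ μ := by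
    apply Finset.image_subset_image
    intro i hi
    simp only [Finset.mem_filter, Finset.mem_univ, true_and] at hi ⊢
    omega
  have hp0 : (0 : ℝ) ≤ p := le_trans zero_le_one hp
  unfold lpN
  apply Real.rpow_le_rpow
  · exact Finset.sum_nonneg fun k _ => Real.rpow_nonneg (abs_nonneg _) p
  · apply Finset.sum_le_sum
    intro k _
    apply Real.rpow_le_rpow (abs_nonneg _) _ hp0
    unfold flipSet
    by_cases h1 : k ∈ firstIdx σ ν
    · simp [h1, hsub h1]
    · by_cases h2 : k ∈ firstIdx σ μ
      · simp only [h1, h2, if_true, if_false]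
        obtain ⟨h0, hle⟩ := ho k
        unfold rnd
        split_ifs with h
        · rw [abs_of_nonpos (by linarith), abs_of_nonneg (by linarith)]; linarith
        · rw [abs_of_nonneg (by linarith), abs_of_nonpos (by linarith)]; linarith
      · simp [h1, h2]
  · positivity
end
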